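/- Bernstein polynomial approximation with second-order rate on the simplex: if $F: \mathcal{S} \to \mathbb{R}$ is twice continuously differentiable on the $d$-dimensional simplex $\mathcal{S}$, then uniformly for $x \in \mathcal{S}$, $F_m^\star(x) = F(x) + m^{-1} B(x) + o(m^{-1})$ as $m \to \infty$, where $F_m^\star(x) = \sum_{k \in \mathbb{N}_0^d \cap m\mathcal{S}} F(k/m) P_{k,m}(x)$ and $B(x) = \frac{1}{2}\sum_{i,j=1}^d (x_i \mathbf{1}_{\{i=j\}} - x_i x_j) \frac{\partial^2 F}{\partial x_i \partial x_j}(x)$. -/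

import Mathlib

open MeasureTheory Finset

/-- The d-dimensional unit simplex. -/
def simplexSet (d : ℕ) : Set (Fin d → ℝ) :=
  {x | (∀ i, 0 ≤ x i ∧ x i ≤ 1) ∧ ∑ i, x i ≤ 1}

/-- The lattice points of the discrete simplex `ℕ₀^d ∩ mS`. -/
def grid (d m : ℕ) : Finset (Fin d → ℕ) :=
  (Finset.Icc 0 (fun _ => m)).filter (fun k => ∑ i, k i ≤ m)

/-- Multinomial(m, x) probability mass at k. -/
noncomputable def Pw (d m : ℕ) (k : Fin d → ℕ) (x : Fin d → ℝ) : ℝ :=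
  ((m.factorial : ℝ) / ((m - ∑ i, k i).factorial * ∏ i, (k i).factorial)) *
    (1 - ∑ i, x i) ^ (m - ∑ i, k i) * ∏ i, x i ^ k i
/-- Bernstein polynomial of order m for F on the simplex. -/
noncomputable def bernsteinPoly (d m : ℕ) (F : (Fin d → ℝ) → ℝ) (x : Fin d → ℝ) : ℝ :=
  ∑ k ∈ grid d m, F (fun i => (k i : ℝ) / m) * Pw d m k x

/-- Second partial derivative ∂²F/∂xᵢ∂xⱼ. -/
noncomputable def secondPartial (d : ℕ) (F : (Fin d → ℝ) → ℝ) (i j : Fin d)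
    (x : Fin d → ℝ) : ℝ :=
  fderiv ℝ (fun y => fderiv ℝ F y (Pi.single j 1)) x (Pi.single i 1)

/-- The bias functional B(x). -/
noncomputable def biasB (d : ℕ) (F : (Fin d → ℝ) → ℝ) (x : Fin d → ℝ) : ℝ :=
  (1 / 2) * ∑ i, ∑ j,
    (x i * (if i = j then 1 else 0) - x i * x j) * secondPartial d F i j x

/-! The multinomial weights `Pw d m · x` form a probability distribution on the grid with mean
`m x` and covariance `m (x_i 1_{i=j} - x_i x_j)`, so the Bernstein operator fixes affine
functions and sends the quadratic Taylor term of `F` at `x` to `B(x)/m`. The error is therefore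
the Bernstein average of the second-order Taylor remainder at `x`. Uniform continuity of `D²F`
on the compact convex simplex bounds that remainder by `η ‖y - x‖² + C_η ‖y - x‖⁴`, and the
second and fourth central moments of the multinomial law are `O(1/m)` and `O(1/m²)`; hence
`m · error ≤ η + O(1/m)`. All moments come from the falling-factorial moments
`E[k_i (k_i - 1) ⋯ (k_i - r + 1)] = m (m - 1) ⋯ (m - r + 1) x_i ^ r`, proved by induction on `m`
from the recursion `(k_i + 1) Pw_{m+1}(k + e_i) = (m + 1) x_i Pw_m(k)`. -/

open Function

section Multinomial

variable {d : ℕ}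

lemma mem_grid {m : ℕ} {k : Fin d → ℕ} : k ∈ grid d m ↔ ∑ i, k i ≤ m := by
  refine ⟨fun h => (mem_filter.mp h).2, fun h => mem_filter.mpr ⟨mem_Icc.mpr ⟨zero_le, ?_⟩, h⟩⟩
  exact fun i => (single_le_sum (fun j _ => Nat.zero_le (k j)) (mem_univ i)).trans h

lemma grid_zero : grid d 0 = {0} := by
  ext k
  simp [mem_grid, funext_iff]

@[to_additive]
lemma prod_apply_update {ι α M : Type*} [Fintype ι] [DecidableEq ι] [CommMonoid M]
    (g : ι → α → M) (k : ι → α) (i : ι) (v : α) :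
    ∏ j, g j (update k i v j) = g i v * ∏ j ∈ univ.erase i, g j (k j) := by
  rw [← mul_prod_erase _ _ (mem_univ i), update_self,
    prod_congr rfl fun j hj => by rw [update_of_ne (ne_of_mem_erase hj)]]

lemma sum_update_add_self (k : Fin d → ℕ) (i : Fin d) (v : ℕ) :
    ∑ j, update k i v j + k i = ∑ j, k j + v := by
  rw [sum_apply_update (fun _ v => v), ← add_sum_erase _ k (mem_univ i)]; ring

lemma sub_mul_Pw_succ {n : ℕ} {k : Fin d → ℕ} (hk : ∑ i, k i ≤ n) (x : Fin d → ℝ) :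
    ((n + 1 : ℕ) - (∑ i, k i : ℕ) : ℝ) * Pw d (n + 1) k x
      = (n + 1) * (1 - ∑ i, x i) * Pw d n k x := by
  have hs : n + 1 - ∑ i, k i = (n - ∑ i, k i) + 1 := by omega
  have hcast : ((n + 1 : ℕ) - (∑ i, k i : ℕ) : ℝ) = ((n - ∑ i, k i : ℕ) : ℝ) + 1 := by
    rw [← Nat.cast_sub (by omega), hs]; push_cast; ring
  unfold Pw
  rw [hs, hcast, Nat.factorial_succ n, Nat.factorial_succ (n - ∑ i, k i), pow_succ]
  have : (∏ i, (k i).factorial : ℝ) ≠ 0 := by positivity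
  push_cast
  field_simp

lemma add_one_mul_Pw_succ_update {n : ℕ} {k : Fin d → ℕ} (hk : ∑ i, k i ≤ n) (i : Fin d)
    (x : Fin d → ℝ) :
    ((k i : ℝ) + 1) * Pw d (n + 1) (update k i (k i + 1)) x = (n + 1) * x i * Pw d n k x := by
  have hsum : ∑ j, update k i (k i + 1) j = ∑ j, k j + 1 := by
    have := sum_update_add_self k i (k i + 1); omega
  have hfact := prod_apply_update (fun _ v => v.factorial) k i (k i + 1)
  have hpow := prod_apply_update (fun j v => x j ^ v) k i (k i + 1)
  beta_reduce at hfact hpow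
  unfold Pw
  rw [hsum, show n + 1 - (∑ j, k j + 1) = n - ∑ j, k j by omega, Nat.factorial_succ n, hfact, hpow,
    ← mul_prod_erase _ (fun j => (k j).factorial) (mem_univ i),
    ← mul_prod_erase _ (fun j => x j ^ k j) (mem_univ i), Nat.factorial_succ (k i), pow_succ]
  have : (∏ j ∈ univ.erase i, (k j).factorial : ℝ) ≠ 0 := by positivity
  push_cast
  field_simp

lemma sum_natCast_mul_Pw_succ {n : ℕ} (i : Fin d) (G : (Fin d → ℕ) → ℝ) (x : Fin d → ℝ) :
    ∑ k ∈ grid d (n + 1), (k i : ℝ) * G k * Pw d (n + 1) k x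
      = (n + 1) * x i * ∑ k ∈ grid d n, G (update k i (k i + 1)) * Pw d n k x := by
  set up : (Fin d → ℕ) → (Fin d → ℕ) := fun k => update k i (k i + 1)
  have hup_inj : Set.InjOn up (grid d n) := fun k _ k' _ h => by
    funext j
    have := congrFun h j
    by_cases hj : j = i
    · subst hj; simpa [up] using this
    · simpa [up, update_of_ne hj] using this
  have hsub : (grid d n).image up ⊆ grid d (n + 1) := by
    intro k' hk'
    obtain ⟨k, hk, rfl⟩ := mem_image.mp hk'
    have := sum_update_add_self k i (k i + 1)
    rw [mem_grid] at hk ⊢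
    simp only [up]
    omega
  have hzero : ∀ k ∈ grid d (n + 1), k ∉ (grid d n).image up →
      (k i : ℝ) * G k * Pw d (n + 1) k x = 0 := by
    intro k hk hk'
    suffices k i = 0 by simp [this]
    by_contra hki
    refine hk' (mem_image.mpr ⟨update k i (k i - 1), ?_, ?_⟩)
    · have := sum_update_add_self k i (k i - 1)
      rw [mem_grid] at hk ⊢
      omega
    · simp only [up, update_self, update_idem, Nat.sub_add_cancel (Nat.pos_of_ne_zero hki),
        update_eq_self]
  rw [← sum_subset hsub hzero, sum_image hup_inj, mul_sum]
  refine sum_congr rfl fun k hk => ?_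
  have h := add_one_mul_Pw_succ_update (mem_grid.mp hk) i x
  simp only [up, update_self]
  push_cast
  linear_combination G (update k i (k i + 1)) * h

lemma sum_sub_mul_Pw_succ (n : ℕ) (x : Fin d → ℝ) :
    ∑ k ∈ grid d (n + 1), ((n + 1 : ℕ) - (∑ i, k i : ℕ) : ℝ) * Pw d (n + 1) k x
      = (n + 1) * (1 - ∑ i, x i) * ∑ k ∈ grid d n, Pw d n k x := by
  have hsub : grid d n ⊆ grid d (n + 1) := fun k hk =>
    mem_grid.mpr ((mem_grid.mp hk).trans n.le_succ)
  rw [← sum_subset hsub, mul_sum]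
  · exact sum_congr rfl fun k hk => sub_mul_Pw_succ (mem_grid.mp hk) x
  · intro k hk hk'
    have : ∑ i, k i = n + 1 := by rw [mem_grid] at hk hk'; omega
    simp [this]

lemma sum_Pw (m : ℕ) (x : Fin d → ℝ) : ∑ k ∈ grid d m, Pw d m k x = 1 := by
  induction m with
  | zero => simp [grid_zero, Pw]
  | succ n ih =>
    have hsplit : ∀ k : Fin d → ℕ, ((n : ℝ) + 1) * Pw d (n + 1) k x
        = ((n + 1 : ℕ) - (∑ i, k i : ℕ) : ℝ) * Pw d (n + 1) k x
          + ∑ i, (k i : ℝ) * 1 * Pw d (n + 1) k x := by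
      intro k
      simp only [mul_one, ← sum_mul]
      push_cast
      ring
    refine mul_left_cancel₀ (n.cast_add_one_ne_zero (R := ℝ)) ?_
    rw [mul_sum, sum_congr rfl fun k _ => hsplit k, sum_add_distrib, sum_comm,
      sum_sub_mul_Pw_succ, ih]
    simp only [sum_natCast_mul_Pw_succ, ih, ← sum_mul, ← mul_sum]
    ring

lemma sum_prod_sub_mul_Pw (i : Fin d) (r m : ℕ) (x : Fin d → ℝ) :
    ∑ k ∈ grid d m, (∏ j ∈ range r, ((k i : ℝ) - j)) * Pw d m k x
      = (∏ j ∈ range r, ((m : ℝ) - j)) * x i ^ r := by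
  induction r generalizing m with
  | zero => simp [sum_Pw]
  | succ r ih =>
    cases m with
    | zero => simp [grid_zero, prod_range_succ']
    | succ n =>
      have hG : ∀ k : Fin d → ℕ, ∏ j ∈ range r, ((update k i (k i + 1) i : ℕ) - ((j + 1 : ℕ) : ℝ))
          = ∏ j ∈ range r, ((k i : ℝ) - j) := fun k => by
        simp only [update_self]; push_cast; simp only [add_sub_add_right_eq_sub]
      have h := sum_natCast_mul_Pw_succ (n := n) i
        (fun k => ∏ j ∈ range r, ((k i : ℝ) - ((j + 1 : ℕ) : ℝ))) x
      simp only [hG, ih] at h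
      simp only [prod_range_succ', Nat.cast_zero, sub_zero]
      rw [sum_congr rfl fun k _ => by rw [mul_comm (∏ j ∈ range r, _)], h]
      push_cast
      simp only [add_sub_add_right_eq_sub]
      ring

lemma sum_natCast_mul_natCast_mul_Pw (i j : Fin d) (m : ℕ) (x : Fin d → ℝ) :
    ∑ k ∈ grid d m, (k i : ℝ) * k j * Pw d m k x
      = m * (m - 1) * x i * x j + if i = j then m * x i else 0 := by
  split_ifs with hij
  · subst hij
    have h1 := sum_prod_sub_mul_Pw i 1 m x
    have h2 := sum_prod_sub_mul_Pw i 2 m x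
    simp only [prod_range_succ, prod_range_zero, Nat.cast_zero, Nat.cast_one, one_mul,
      sub_zero] at h1 h2
    have hsplit : ∑ k ∈ grid d m, (k i : ℝ) * k i * Pw d m k x
        = ∑ k ∈ grid d m, (k i : ℝ) * (k i - 1) * Pw d m k x
          + ∑ k ∈ grid d m, (k i : ℝ) * Pw d m k x := by
      rw [← sum_add_distrib]
      exact sum_congr rfl fun k _ => by ring
    rw [hsplit, h1, h2]
    ring
  · cases m with
    | zero => simp [grid_zero]
    | succ n =>
      have h1 := sum_prod_sub_mul_Pw j 1 n x
      simp only [prod_range_one, Nat.cast_zero, sub_zero, pow_one] at h1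
      rw [sum_natCast_mul_Pw_succ i (fun k => (k j : ℝ)) x]
      simp only [update_of_ne (Ne.symm hij), h1]
      push_cast
      ring

end Multinomial

section Simplex

variable {d : ℕ}

lemma Pw_nonneg {m : ℕ} (k : Fin d → ℕ) {x : Fin d → ℝ} (hx : x ∈ simplexSet d) :
    0 ≤ Pw d m k x := by
  unfold Pw
  exact mul_nonneg (mul_nonneg (by positivity) (pow_nonneg (sub_nonneg.mpr hx.2) _))
    (prod_nonneg fun i _ => pow_nonneg (hx.1 i).1 _)

lemma div_mem_simplexSet {m : ℕ} {k : Fin d → ℕ} (hk : k ∈ grid d m) :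
    (fun i => (k i : ℝ) / m) ∈ simplexSet d := by
  have hsum : (∑ i, k i : ℝ) ≤ m := by exact_mod_cast mem_grid.mp hk
  refine ⟨fun i => ⟨by positivity, div_le_one_of_le₀ ?_ m.cast_nonneg⟩, ?_⟩
  · exact (single_le_sum (fun j _ => (k j).cast_nonneg) (mem_univ i)).trans hsum
  · rw [← sum_div]
    exact div_le_one_of_le₀ hsum m.cast_nonneg

lemma convex_simplexSet : Convex ℝ (simplexSet d) := by
  intro x hx y hy a b ha hb hab
  refine ⟨fun i => ⟨?_, ?_⟩, ?_⟩
  · simp only [Pi.add_apply, Pi.smul_apply, smul_eq_mul]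
    nlinarith [hx.1 i, hy.1 i]
  · simp only [Pi.add_apply, Pi.smul_apply, smul_eq_mul]
    nlinarith [hx.1 i, hy.1 i]
  · simp only [Pi.add_apply, Pi.smul_apply, smul_eq_mul, sum_add_distrib, ← mul_sum]
    nlinarith [hx.2, hy.2]

lemma isCompact_simplexSet : IsCompact (simplexSet d) := by
  have hclosed : IsClosed (simplexSet d) := by
    simp only [simplexSet, Set.ofPred_and, Set.ofPred_forall]
    exact (isClosed_iInter fun i => (isClosed_le continuous_const (continuous_apply i)).inter
      (isClosed_le (continuous_apply i) continuous_const)).inter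
      (isClosed_le (continuous_finsetSum _ fun i _ => continuous_apply i) continuous_const)
  exact isCompact_Icc.of_isClosed_subset hclosed fun x hx =>
    ⟨fun i => (hx.1 i).1, fun i => (hx.1 i).2⟩

end Simplex

section BernsteinPoly

variable {d m : ℕ}

lemma bernsteinPoly_add (F G : (Fin d → ℝ) → ℝ) (x : Fin d → ℝ) :
    bernsteinPoly d m (fun y => F y + G y) x = bernsteinPoly d m F x + bernsteinPoly d m G x := by
  simp only [bernsteinPoly, add_mul, sum_add_distrib]

lemma bernsteinPoly_const_mul (c : ℝ) (F : (Fin d → ℝ) → ℝ) (x : Fin d → ℝ) :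
    bernsteinPoly d m (fun y => c * F y) x = c * bernsteinPoly d m F x := by
  simp only [bernsteinPoly, mul_sum, mul_assoc]

lemma bernsteinPoly_sum {ι : Type*} (s : Finset ι) (F : ι → (Fin d → ℝ) → ℝ) (x : Fin d → ℝ) :
    bernsteinPoly d m (fun y => ∑ i ∈ s, F i y) x = ∑ i ∈ s, bernsteinPoly d m (F i) x := by
  simp only [bernsteinPoly, sum_mul]
  exact sum_comm

lemma bernsteinPoly_const (c : ℝ) (x : Fin d → ℝ) : bernsteinPoly d m (fun _ => c) x = c := by
  rw [bernsteinPoly, ← mul_sum, sum_Pw, mul_one]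

lemma abs_bernsteinPoly_le {F G : (Fin d → ℝ) → ℝ} {x : Fin d → ℝ} (hx : x ∈ simplexSet d)
    (hFG : ∀ y ∈ simplexSet d, |F y| ≤ G y) : |bernsteinPoly d m F x| ≤ bernsteinPoly d m G x := by
  refine (abs_sum_le_sum_abs _ _).trans (sum_le_sum fun k hk => ?_)
  rw [abs_mul, abs_of_nonneg (Pw_nonneg k hx)]
  exact mul_le_mul_of_nonneg_right (hFG _ (div_mem_simplexSet hk)) (Pw_nonneg k hx)

variable (hm : m ≠ 0)
include hm

lemma bernsteinPoly_sub_coord (i : Fin d) (x : Fin d → ℝ) :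
    bernsteinPoly d m (fun y => y i - x i) x = 0 := by
  have h1 := sum_prod_sub_mul_Pw i 1 m x
  simp only [prod_range_one, Nat.cast_zero, sub_zero, pow_one] at h1
  have hsplit : bernsteinPoly d m (fun y => y i - x i) x
      = (m : ℝ)⁻¹ * ∑ k ∈ grid d m, (k i : ℝ) * Pw d m k x - x i * ∑ k ∈ grid d m, Pw d m k x := by
    rw [mul_sum, mul_sum, ← sum_sub_distrib]
    exact sum_congr rfl fun k _ => by ring
  rw [hsplit, h1, sum_Pw]
  field_simp
  ring

lemma bernsteinPoly_sub_coord_mul (i j : Fin d) (x : Fin d → ℝ) :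
    bernsteinPoly d m (fun y => (y i - x i) * (y j - x j)) x
      = (x i * (if i = j then 1 else 0) - x i * x j) / m := by
  have hi := sum_prod_sub_mul_Pw i 1 m x
  have hj := sum_prod_sub_mul_Pw j 1 m x
  simp only [prod_range_one, Nat.cast_zero, sub_zero, pow_one] at hi hj
  have hsplit : bernsteinPoly d m (fun y => (y i - x i) * (y j - x j)) x
      = (m : ℝ)⁻¹ ^ 2 * ∑ k ∈ grid d m, (k i : ℝ) * k j * Pw d m k x
        - x j * (m : ℝ)⁻¹ * ∑ k ∈ grid d m, (k i : ℝ) * Pw d m k x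
        - x i * (m : ℝ)⁻¹ * ∑ k ∈ grid d m, (k j : ℝ) * Pw d m k x
        + x i * x j * ∑ k ∈ grid d m, Pw d m k x := by
    simp only [mul_sum, ← sum_sub_distrib, ← sum_add_distrib]
    exact sum_congr rfl fun k _ => by ring
  rw [hsplit, sum_natCast_mul_natCast_mul_Pw, hi, hj, sum_Pw]
  split_ifs <;> field_simp <;> ring

lemma bernsteinPoly_sub_coord_pow_four_le (i : Fin d) {x : Fin d → ℝ} (hx0 : 0 ≤ x i)
    (hx1 : x i ≤ 1) : bernsteinPoly d m (fun y => (y i - x i) ^ 4) x ≤ 2 * x i / m ^ 2 := by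
  have h := fun r => sum_prod_sub_mul_Pw i r m x
  have h1 := h 1; have h2 := h 2; have h3 := h 3; have h4 := h 4
  simp only [prod_range_succ, prod_range_zero, Nat.cast_zero, Nat.cast_one, Nat.cast_ofNat,
    one_mul, sub_zero] at h1 h2 h3 h4
  set c := x i
  -- expand `(K - m c) ^ 4` in the falling factorials of `K = k i`
  have hsplit : bernsteinPoly d m (fun y => (y i - c) ^ 4) x
      = (m : ℝ)⁻¹ ^ 4 *
        (∑ k ∈ grid d m, (k i : ℝ) * (k i - 1) * (k i - 2) * (k i - 3) * Pw d m k x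
        + (6 - 4 * m * c) * ∑ k ∈ grid d m, (k i : ℝ) * (k i - 1) * (k i - 2) * Pw d m k x
        + (7 - 12 * m * c + 6 * m ^ 2 * c ^ 2) * ∑ k ∈ grid d m, (k i : ℝ) * (k i - 1) * Pw d m k x
        + (1 - 4 * m * c + 6 * m ^ 2 * c ^ 2 - 4 * m ^ 3 * c ^ 3)
          * ∑ k ∈ grid d m, (k i : ℝ) * Pw d m k x
        + m ^ 4 * c ^ 4 * ∑ k ∈ grid d m, Pw d m k x) := by
    simp only [mul_sum, ← sum_add_distrib]
    refine sum_congr rfl fun k _ => ?_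
    field_simp
    ring
  have hm1 : (1 : ℝ) ≤ m := by exact_mod_cast Nat.one_le_iff_ne_zero.mpr hm
  have hq0 : 0 ≤ c * (1 - c) := mul_nonneg hx0 (sub_nonneg.mpr hx1)
  have hqc : c * (1 - c) ≤ c := by nlinarith
  have hq : c * (1 - c) ≤ 1 / 4 := by nlinarith [sq_nonneg (c - 1 / 2)]
  rw [hsplit, h1, h2, h3, h4, sum_Pw, le_div_iff₀ (by positivity)]
  calc _ = c * (1 - c) * (1 + 3 * (m - 2) * (c * (1 - c))) / m := by field_simp; ring
    _ ≤ c * (2 * m) / m := by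
      gcongr <;> nlinarith [mul_le_mul_of_nonneg_left hq (by positivity : (0 : ℝ) ≤ m)]
    _ = 2 * c := by field_simp

end BernsteinPoly

section Taylor

variable {E G : Type*} [NormedAddCommGroup E] [NormedSpace ℝ E] [NormedAddCommGroup G]
  [NormedSpace ℝ G]

noncomputable def secondOrderTaylorRemainder (f : E → G) (x y : E) : G :=
  f y - f x - fderiv ℝ f x (y - x) - (1 / 2 : ℝ) • fderiv ℝ (fderiv ℝ f) x (y - x) (y - x)

lemma norm_secondOrderTaylorRemainder_le {f : E → G} (hf : ContDiff ℝ 2 f) {a b : E} {K : ℝ}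
    (hK : ∀ ξ ∈ segment ℝ a b, ‖fderiv ℝ (fderiv ℝ f) ξ - fderiv ℝ (fderiv ℝ f) a‖ ≤ K) :
    ‖secondOrderTaylorRemainder f a b‖ ≤ K * ‖b - a‖ ^ 2 := by
  have hdf : Differentiable ℝ f := hf.differentiable (by norm_num)
  have hd2f : Differentiable ℝ (fderiv ℝ f) :=
    (hf.fderiv_right (m := 1) le_rfl).differentiable one_ne_zero
  set B := fderiv ℝ (fderiv ℝ f) a
  have hB : ∀ v w, B v w = B w v := (hf.contDiffAt.isSymmSndFDerivAt (by simp))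
  have hK0 : 0 ≤ K := (norm_nonneg (B - B)).trans (hK a (left_mem_segment ℝ a b))
  have hsub : ∀ y, HasFDerivAt (fun z : E => z - a) (ContinuousLinearMap.id ℝ E) y :=
    fun y => (hasFDerivAt_id y).sub_const a
  have hfirst : ∀ y ∈ segment ℝ a b, ‖fderiv ℝ f y - fderiv ℝ f a - B (y - a)‖ ≤ K * ‖b - a‖ := by
    intro y hy
    have hderiv : ∀ z ∈ segment ℝ a b, HasFDerivWithinAt (fun z => fderiv ℝ f z - B (z - a))
        (fderiv ℝ (fderiv ℝ f) z - B) (segment ℝ a b) z := fun z _ =>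
      ((hd2f z).hasFDerivAt.sub (B.hasFDerivAt.comp z (hsub z))).hasFDerivWithinAt
    have := (convex_segment a b).norm_image_sub_le_of_norm_hasFDerivWithin_le hderiv hK
      (left_mem_segment ℝ a b) hy
    simp only [sub_self, map_zero, sub_zero] at this
    calc _ = ‖fderiv ℝ f y - B (y - a) - fderiv ℝ f a‖ := by congr 1; abel
      _ ≤ K * ‖y - a‖ := this
      _ ≤ K * ‖b - a‖ := by
        gcongr
        exact norm_sub_le_of_mem_segment hy
  have hquad : ∀ y, HasFDerivAt (fun z => (1 / 2 : ℝ) • B (z - a) (z - a)) (B (y - a)) y := by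
    intro y
    have h := ((B.hasFDerivAt.comp y (hsub y)).clm_apply (hsub y)).const_smul (1 / 2 : ℝ)
    convert h using 1
    · rfl
    · ext v
      simp only [map_sub, sub_apply, one_div, Function.comp_apply, ContinuousLinearMap.comp_id,
        smul_add, add_apply, smul_apply, ContinuousLinearMap.flip_apply]
      rw [hB v y, hB v a]
      module
  have hderiv : ∀ y ∈ segment ℝ a b, HasFDerivWithinAt
      (fun y => f y - fderiv ℝ f a (y - a) - (1 / 2 : ℝ) • B (y - a) (y - a))
      (fderiv ℝ f y - fderiv ℝ f a - B (y - a)) (segment ℝ a b) y := fun y _ =>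
    (((hdf y).hasFDerivAt.sub ((fderiv ℝ f a).hasFDerivAt.comp y (hsub y))).sub
      (hquad y)).hasFDerivWithinAt
  have := (convex_segment a b).norm_image_sub_le_of_norm_hasFDerivWithin_le hderiv hfirst
    (left_mem_segment ℝ a b) (right_mem_segment ℝ a b)
  simp only [sub_self, map_zero, smul_zero, sub_zero] at this
  calc _ = ‖f b - fderiv ℝ f a (b - a) - (1 / 2 : ℝ) • B (b - a) (b - a) - f a‖ := by
        unfold secondOrderTaylorRemainder; congr 1; abel
    _ ≤ K * ‖b - a‖ * ‖b - a‖ := this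
    _ = K * ‖b - a‖ ^ 2 := by ring

lemma exists_norm_secondOrderTaylorRemainder_le {f : E → G} (hf : ContDiff ℝ 2 f) {s : Set E}
    (hs : IsCompact s) (hsc : Convex ℝ s) {η : ℝ} (hη : 0 < η) :
    ∃ C, 0 ≤ C ∧ ∀ x ∈ s, ∀ y ∈ s,
      ‖secondOrderTaylorRemainder f x y‖ ≤ η * ‖y - x‖ ^ 2 + C * ‖y - x‖ ^ 4 := by
  set D2 := fderiv ℝ (fderiv ℝ f)
  have hcont : Continuous D2 := (hf.fderiv_right (m := 1) le_rfl).continuous_fderiv one_ne_zero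
  obtain ⟨C₀, hC₀⟩ := hs.exists_bound_of_continuousOn (f := D2) hcont.continuousOn
  obtain ⟨δ, hδ, hδη⟩ := (Metric.uniformContinuousOn_iff (f := D2) (s := s)).mp
    (hs.uniformContinuousOn_of_continuous (f := D2) hcont.continuousOn) η hη
  refine ⟨2 * max C₀ 0 / δ ^ 2, by positivity, fun x hx y hy => ?_⟩
  have hseg : segment ℝ x y ⊆ s := hsc.segment_subset hx hy
  rcases lt_or_ge ‖y - x‖ δ with hnear | hfar
  · have hK : ∀ ξ ∈ segment ℝ x y, ‖D2 ξ - D2 x‖ ≤ η := by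
      intro ξ hξ
      have hξx : dist ξ x < δ := (dist_eq_norm ξ x).trans_lt
        ((norm_sub_le_of_mem_segment hξ).trans_lt hnear)
      have := hδη ξ (hseg hξ) x hx hξx
      rw [dist_eq_norm (D2 ξ) (D2 x)] at this
      exact this.le
    have hfour : 0 ≤ 2 * max C₀ 0 / δ ^ 2 * ‖y - x‖ ^ 4 := by positivity
    linarith [norm_secondOrderTaylorRemainder_le hf hK]
  · have hK : ∀ ξ ∈ segment ℝ x y, ‖D2 ξ - D2 x‖ ≤ 2 * max C₀ 0 := fun ξ hξ =>
      (norm_sub_le (D2 ξ) (D2 x)).trans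
        (by linarith [hC₀ ξ (hseg hξ), hC₀ x hx, le_max_left C₀ 0])
    have hsq : ‖y - x‖ ^ 2 ≤ ‖y - x‖ ^ 4 / δ ^ 2 := by
      rw [le_div_iff₀ (by positivity)]
      nlinarith [pow_le_pow_left₀ hδ.le hfar 2, sq_nonneg (‖y - x‖)]
    calc _ ≤ 2 * max C₀ 0 * ‖y - x‖ ^ 2 := norm_secondOrderTaylorRemainder_le hf hK
      _ ≤ 2 * max C₀ 0 * (‖y - x‖ ^ 4 / δ ^ 2) := by gcongr
      _ = 2 * max C₀ 0 / δ ^ 2 * ‖y - x‖ ^ 4 := by ring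
      _ ≤ _ := le_add_of_nonneg_left (by positivity)

end Taylor

lemma pi_norm_pow_le_sum {ι : Type*} [Fintype ι] (v : ι → ℝ) {n : ℕ} (hn : n ≠ 0) :
    ‖v‖ ^ n ≤ ∑ i, |v i| ^ n := by
  rcases isEmpty_or_nonempty ι with hι | hι
  · simp [Subsingleton.elim v 0, hn]
  · obtain ⟨i, hi⟩ := (IsGreatest.pi_norm v).1
    beta_reduce at hi
    rw [← hi, Real.norm_eq_abs]
    exact single_le_sum (f := fun i => |v i| ^ n) (fun j _ => by positivity) (mem_univ i)

lemma abs_bernsteinPoly_le_of_le_sq_add_pow_four {d m : ℕ} (hm : m ≠ 0) {x : Fin d → ℝ}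
    (hx : x ∈ simplexSet d) {F : (Fin d → ℝ) → ℝ} {η C : ℝ} (hη : 0 ≤ η) (hC : 0 ≤ C)
    (hF : ∀ y ∈ simplexSet d, |F y| ≤ η * ‖y - x‖ ^ 2 + C * ‖y - x‖ ^ 4) :
    |bernsteinPoly d m F x| ≤ η / m + 2 * C / m ^ 2 := by
  have hFG : ∀ y ∈ simplexSet d,
      |F y| ≤ η * ∑ i, (y i - x i) * (y i - x i) + C * ∑ i, (y i - x i) ^ 4 := by
    intro y hy
    have h2 := pi_norm_pow_le_sum (y - x) two_ne_zero
    have h4 := pi_norm_pow_le_sum (y - x) four_ne_zero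
    simp only [Pi.sub_apply, sq_abs, ← sq, (by decide : Even 4).pow_abs] at h2 h4 ⊢
    exact (hF y hy).trans (by gcongr)
  have hsum : ∑ i, x i ≤ 1 := hx.2
  refine (abs_bernsteinPoly_le hx hFG).trans ?_
  rw [bernsteinPoly_add, bernsteinPoly_const_mul, bernsteinPoly_const_mul, bernsteinPoly_sum,
    bernsteinPoly_sum]
  simp only [bernsteinPoly_sub_coord_mul hm, if_true]
  have hvar : ∑ i, (x i * 1 - x i * x i) / m ≤ 1 / m := by
    rw [← sum_div]
    gcongr
    exact (sum_le_sum fun i _ => by nlinarith [hx.1 i]).trans hsum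
  have hfourth : ∑ i, bernsteinPoly d m (fun y => (y i - x i) ^ 4) x ≤ 2 / m ^ 2 := by
    calc _ ≤ ∑ i, 2 * x i / m ^ 2 :=
          sum_le_sum fun i _ => bernsteinPoly_sub_coord_pow_four_le hm i (hx.1 i).1 (hx.1 i).2
      _ ≤ 2 / m ^ 2 := by
        rw [← sum_div, ← mul_sum]
        gcongr
        linarith
  calc _ ≤ η * (1 / m) + C * (2 / m ^ 2) := by gcongr
    _ = η / m + 2 * C / m ^ 2 := by ring

lemma secondPartial_eq {d : ℕ} {F : (Fin d → ℝ) → ℝ} {x : Fin d → ℝ}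
    (hF : DifferentiableAt ℝ (fderiv ℝ F) x) (i j : Fin d) :
    secondPartial d F i j x = fderiv ℝ (fderiv ℝ F) x (Pi.single i 1) (Pi.single j 1) := by
  rw [secondPartial, fderiv_clm_apply hF (differentiableAt_const _)]
  simp

section BernsteinPolyTaylor

variable {d m : ℕ} (hm : m ≠ 0)
include hm

lemma bernsteinPoly_clm_sub (L : (Fin d → ℝ) →L[ℝ] ℝ) (x : Fin d → ℝ) :
    bernsteinPoly d m (fun y => L (y - x)) x = 0 := by
  have hL : ∀ y : Fin d → ℝ, L (y - x) = ∑ i, L (Pi.single i 1) * (y i - x i) := fun y => by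
    conv_lhs => rw [pi_eq_sum_univ' (y - x)]
    simp [mul_comm]
  simp only [hL, bernsteinPoly_sum, bernsteinPoly_const_mul, bernsteinPoly_sub_coord hm, mul_zero,
    sum_const_zero]

lemma bernsteinPoly_clm_sub_sub (B : (Fin d → ℝ) →L[ℝ] (Fin d → ℝ) →L[ℝ] ℝ) (x : Fin d → ℝ) :
    bernsteinPoly d m (fun y => B (y - x) (y - x)) x
      = (∑ i, ∑ j, (x i * (if i = j then 1 else 0) - x i * x j)
          * B (Pi.single i 1) (Pi.single j 1)) / m := by
  have hB : ∀ y : Fin d → ℝ, B (y - x) (y - x)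
      = ∑ i, ∑ j, B (Pi.single i 1) (Pi.single j 1) * ((y i - x i) * (y j - x j)) := fun y => by
    conv_lhs => rw [pi_eq_sum_univ' (y - x)]
    simp only [Pi.sub_apply, map_sum, map_smul, _root_.sum_apply, smul_apply, smul_eq_mul, mul_sum]
    rw [sum_comm]
    exact sum_congr rfl fun i _ => sum_congr rfl fun j _ => by ring
  simp only [hB, bernsteinPoly_sum, bernsteinPoly_const_mul, bernsteinPoly_sub_coord_mul hm,
    sum_div]
  exact sum_congr rfl fun i _ => sum_congr rfl fun j _ => by ring

lemma bernsteinPoly_sub_sub_biasB_div {F : (Fin d → ℝ) → ℝ} {x : Fin d → ℝ}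
    (hF : DifferentiableAt ℝ (fderiv ℝ F) x) :
    bernsteinPoly d m F x - F x - biasB d F x / m
      = bernsteinPoly d m (secondOrderTaylorRemainder F x) x := by
  have hexpand : F = fun y => F x + (fderiv ℝ F x (y - x)
      + ((1 / 2) * fderiv ℝ (fderiv ℝ F) x (y - x) (y - x)
        + secondOrderTaylorRemainder F x y)) := by
    funext y
    simp only [secondOrderTaylorRemainder, smul_eq_mul]
    ring
  conv_lhs => enter [1, 1]; rw [hexpand]
  rw [bernsteinPoly_add, bernsteinPoly_const, bernsteinPoly_add, bernsteinPoly_clm_sub hm,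
    bernsteinPoly_add, bernsteinPoly_const_mul, bernsteinPoly_clm_sub_sub hm, biasB]
  simp only [secondPartial_eq hF]
  ring

end BernsteinPolyTaylor

theorem bernstein_poly_second_order_general (d : ℕ)
    (F : (Fin d → ℝ) → ℝ) (hF : ContDiff ℝ 2 F) :
    ∀ ε > (0 : ℝ), ∃ M : ℕ, ∀ m : ℕ, M ≤ m → ∀ x ∈ simplexSet d,
      (m : ℝ) * |bernsteinPoly d m F x - F x - biasB d F x / m| ≤ ε := by
  intro ε hε
  obtain ⟨C, hC, hR⟩ := exists_norm_secondOrderTaylorRemainder_le hF isCompact_simplexSet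
    convex_simplexSet (half_pos hε)
  obtain ⟨M, hM⟩ := exists_nat_ge (4 * C / ε)
  refine ⟨M + 1, fun m hm x hx => ?_⟩
  have hm0 : m ≠ 0 := by omega
  have hmM : 4 * C / ε ≤ m := hM.trans (by exact_mod_cast M.le_succ.trans hm)
  rw [bernsteinPoly_sub_sub_biasB_div hm0
    ((hF.fderiv_right (m := 1) le_rfl).differentiable one_ne_zero x)]
  have hbound := abs_bernsteinPoly_le_of_le_sq_add_pow_four hm0 hx
    (half_pos hε).le hC fun y hy => by simpa only [Real.norm_eq_abs] using hR x hx y hy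
  calc _ ≤ (m : ℝ) * (ε / 2 / m + 2 * C / m ^ 2) := by gcongr
    _ = ε / 2 + 2 * C / m := by field_simp
    _ ≤ ε := by
      rw [div_le_iff₀ hε] at hmM
      have : 2 * C / m ≤ ε / 2 := by rw [div_le_iff₀ (by positivity)]; linarith
      linarith

/-- Second-order uniform approximation by Bernstein polynomials on the simplex:
`F_m⋆(x) = F(x) + m⁻¹ B(x) + o(m⁻¹)` uniformly in x. -/
theorem bernstein_poly_second_order (d : ℕ) (hd : 1 ≤ d)
    (F : (Fin d → ℝ) → ℝ) (hF : ContDiff ℝ 2 F) :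
    ∀ ε > (0 : ℝ), ∃ M : ℕ, ∀ m : ℕ, M ≤ m → ∀ x ∈ simplexSet d,
      (m : ℝ) * |bernsteinPoly d m F x - F x - biasB d F x / m| ≤ ε :=
  bernstein_poly_second_order_general d F hF
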